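/- arXiv:2407.05476 — 4 statements merged into one kernel-verified Lean document; each statement's English description precedes it below -/
import Mathlib

section
/- Let S be a nonsingular symmetric 3×3 integer matrix with det S = D > 0, let S* = D·S⁻¹ be its adjugate, and let y ∈ ℝ³ satisfy S*(y) = 4D, where S*(y) = y S* yᵀ. Then for every T > 0 there are at most finitely many primitive x ∈ ℤ³ with S(x) = 0 and 0 < xyᵀ ≤ T. -/
open Matrix Filter Topology
open scoped BigOperators

/-- The space of integral ternary quadratic forms (symmetric 3×3 integer matrices). -/
abbrev M3 : Type := Matrix (Fin 3) (Fin 3) ℤ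

/-- The quadratic form `S(x) = x S xᵀ` attached to a symmetric matrix. -/
def QF {R : Type*} [CommRing R] (S : Matrix (Fin 3) (Fin 3) R) (x : Fin 3 → R) : R :=
  x ⬝ᵥ S.mulVec x

/-- A vector in `ℤ³` is primitive if the gcd of its coordinates is 1. -/
def PrimVec (x : Fin 3 → ℤ) : Prop := Int.gcd (x 0) (Int.gcd (x 1) (x 2)) = 1

/-- A ternary form is primitive if the gcd of its six coefficients is 1. -/
def PrimForm (S : M3) : Prop :=
  Int.gcd (S 0 0) (Int.gcd (S 1 1) (Int.gcd (S 2 2)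
    (Int.gcd (S 0 1) (Int.gcd (S 1 2) (S 0 2))))) = 1

/-- `S` is isotropic if it has a primitive integral zero. -/
def Isotropic (S : M3) : Prop := ∃ x : Fin 3 → ℤ, PrimVec x ∧ QF S x = 0

/-- `C(S)`: the set of primitive integral zeros of `S`. -/
def ZeroSet (S : M3) : Set (Fin 3 → ℤ) := {x | PrimVec x ∧ QF S x = 0}

/-- `A ∈ O(S)`: an integral automorph of `S`, i.e. `A ∈ GL₃(ℤ)` with `AᵀSA = S`. -/
def IsAuto (S A : M3) : Prop := IsUnit A.det ∧ Aᵀ * S * A = S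

/-- `x` and `x'` lie in the same `ℤ`-orbit: `x' = x Aᵀ` for some automorph `A`
(as row vectors; equivalently `x' = A x` as column vectors). -/
def SameOrbit (S : M3) (x x' : Fin 3 → ℤ) : Prop :=
  ∃ A : M3, IsAuto S A ∧ x' = A.mulVec x

/-- The orbit relation on the set of primitive zeros. -/
def OrbRel (S : M3) (x x' : ZeroSet S) : Prop := SameOrbit S x.1 x'.1

/-- `c(S)`: the number of `ℤ`-orbits of primitive integral zeros of `S`. -/
noncomputable def cZ (S : M3) : ℕ := Nat.card (Quot (OrbRel S))

/-- Two integral forms are in the same class if `AᵀSA = S'` for some `A ∈ GL₃(ℤ)`. -/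
def SameClass (S S' : M3) : Prop := ∃ A : M3, IsUnit A.det ∧ Aᵀ * S * A = S'

/-- Proper equivalence: `MᵀSM = S'` for some `M ∈ SL₃(ℤ)`. -/
def ProperEquiv (S S' : M3) : Prop := ∃ M : M3, M.det = 1 ∧ Mᵀ * S * M = S'

/-- `ℤ_p`-equivalence of two integral forms. -/
def pEquiv (p : ℕ) [Fact p.Prime] (S S' : M3) : Prop :=
  ∃ A : Matrix (Fin 3) (Fin 3) ℤ_[p], IsUnit A.det ∧
    Aᵀ * S.map (Int.cast : ℤ → ℤ_[p]) * A = S'.map (Int.cast : ℤ → ℤ_[p])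

/-- `S` and `S'` are in the same genus: they are `ℤ_p`-equivalent for every prime `p`
and `ℝ`-equivalent. -/
def SameGenus (S S' : M3) : Prop :=
  (∀ p : ℕ, (hp : p.Prime) → @pEquiv p ⟨hp⟩ S S') ∧
  (∃ A : Matrix (Fin 3) (Fin 3) ℝ, IsUnit A.det ∧
    Aᵀ * S.map (Int.cast : ℤ → ℝ) * A = S'.map (Int.cast : ℤ → ℝ))

/-- A vector in `ℤ_p³` is primitive if some coordinate is a `p`-adic unit. -/
def pPrimVec (p : ℕ) [Fact p.Prime] (x : Fin 3 → ℤ_[p]) : Prop := ∃ i, IsUnit (x i)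

/-- `C_p(S)`: the set of primitive `p`-adic integral zeros of `S`. -/
def pZeroSet (p : ℕ) [Fact p.Prime] (S : M3) : Set (Fin 3 → ℤ_[p]) :=
  {x | pPrimVec p x ∧ QF (S.map (Int.cast : ℤ → ℤ_[p])) x = 0}

/-- The orbit relation on `C_p(S)` under `ℤ_p`-automorphs of `S`. -/
def pOrbRel (p : ℕ) [Fact p.Prime] (S : M3) (x x' : pZeroSet p S) : Prop :=
  ∃ A : Matrix (Fin 3) (Fin 3) ℤ_[p], IsUnit A.det ∧
    Aᵀ * S.map (Int.cast : ℤ → ℤ_[p]) * A = S.map (Int.cast : ℤ → ℤ_[p]) ∧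
    (x'.1 : Fin 3 → ℤ_[p]) = A.mulVec x.1

/-- `c_p(S)` for a prime `p`. -/
noncomputable def cZpAux (p : ℕ) [Fact p.Prime] (S : M3) : ℕ := Nat.card (Quot (pOrbRel p S))

/-- `c_p(S)`: the number of `ℤ_p`-orbits of primitive `p`-adic zeros (set to 1 for non-primes). -/
noncomputable def cZp (p : ℕ) (S : M3) : ℕ :=
  if h : p.Prime then @cZpAux p ⟨h⟩ S else 1

/-- `Ω`: minus the gcd of the 2×2 minors of `S` (the entries of the adjugate `S* = D·S⁻¹`),
so `Ω < 0` by convention. -/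
def OmegaInv (S : M3) : ℤ :=
  -(Finset.univ.gcd fun ij : Fin 3 × Fin 3 => S.adjugate ij.1 ij.2)

/-- `Δ`, defined by `D = Ω²Δ`. -/
def DeltaInv (S : M3) : ℤ := S.det / OmegaInv S ^ 2

/-- `N = gcd(−Ω, Δ)`. -/
def Nval (S : M3) : ℤ := (Int.gcd (OmegaInv S) (DeltaInv S) : ℤ)

/-- `S` is special: primitive, isotropic, `D > 0`, and `N`, `−Ω/N`, `Δ/N` squarefree. -/
def IsSpecial (S : M3) : Prop :=
  PrimForm S ∧ Isotropic S ∧ 0 < S.det ∧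
  Squarefree (Nval S) ∧ Squarefree (-OmegaInv S / Nval S) ∧ Squarefree (DeltaInv S / Nval S)

/-- `N₅ = gcd(N, −Ω/N)`. -/
def N5v (S : M3) : ℤ := (Int.gcd (Nval S) (-OmegaInv S / Nval S) : ℤ)

/-- `N₄ = gcd(N, Δ/N)`. -/
def N4v (S : M3) : ℤ := (Int.gcd (Nval S) (DeltaInv S / Nval S) : ℤ)

/-- `N₃ = N/(N₄N₅)`. -/
def N3v (S : M3) : ℤ := Nval S / (N4v S * N5v S)

/-- `N₂ = −Ω/(N·N₅)`. -/
def N2v (S : M3) : ℤ := -OmegaInv S / (Nval S * N5v S)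

/-- `N₁ = Δ/(N·N₄)`. -/
def N1v (S : M3) : ℤ := DeltaInv S / (Nval S * N4v S)

/-- The reduced matrix `S₃(ℓ)` of Lemma 1. -/
def S3mat (S : M3) (l : ℤ) : M3 :=
  !![0, 0, N3v S * N5v S * N4v S ^ 2 * N2v S;
     0, -(N3v S * N5v S ^ 3 * N1v S), 0;
     N3v S * N5v S * N4v S ^ 2 * N2v S, 0, N4v S * N2v S * l]

/-- `x yᵀ` for an integral row vector `x` and a real vector `y`. -/
noncomputable def dotR (x : Fin 3 → ℤ) (y : Fin 3 → ℝ) : ℝ := ∑ i, (x i : ℝ) * y i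

/-- The number of points of the orbit `C(S,x)` with `0 < x'yᵀ ≤ T`. -/
noncomputable def countOrb (S : M3) (x : Fin 3 → ℤ) (y : Fin 3 → ℝ) (T : ℝ) : ℕ :=
  Nat.card {x' : Fin 3 → ℤ // x' ∈ ZeroSet S ∧ SameOrbit S x x' ∧ 0 < dotR x' y ∧ dotR x' y ≤ T}

/-- The number of points of `C(S)` with `0 < x'yᵀ ≤ T`. -/
noncomputable def countAll (S : M3) (y : Fin 3 → ℝ) (T : ℝ) : ℕ :=
  Nat.card {x' : Fin 3 → ℤ // x' ∈ ZeroSet S ∧ 0 < dotR x' y ∧ dotR x' y ≤ T}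

/-- `h`: the number of classes in the genus of `S`. -/
noncomputable def classNum (S : M3) : ℕ :=
  Nat.card (Quot (fun S1 S2 : {S' : M3 // SameGenus S S'} => SameClass S1.1 S2.1))

section AuxStrip

private lemma key_aux (A : Matrix (Fin 3) (Fin 3) ℝ) (hA : A.IsSymm) (hdet : 0 < A.det)
    (x w : Fin 3 → ℝ) (hx : x ⬝ᵥ A.mulVec x = 0) (hxw : x ⬝ᵥ A.mulVec w = 0)
    (hw : w ⬝ᵥ A.mulVec w = 4) : x = 0 := by
  have hs : ∀ i j, A j i = A i j := fun i j => by
    conv_lhs => rw [← hA]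
    rfl
  set u : Fin 3 → ℝ := ![x 1 * w 2 - x 2 * w 1, x 2 * w 0 - x 0 * w 2, x 0 * w 1 - x 1 * w 0]
    with hu
  set P : Matrix (Fin 3) (Fin 3) ℝ := Matrix.of ![x, w, u] with hP
  have hdetP : P.det = u 0 ^ 2 + u 1 ^ 2 + u 2 ^ 2 := by
    rw [Matrix.det_fin_three]
    simp [hP, hu]
    ring
  have hG : (P * A * Pᵀ).det = P.det * A.det * P.det := by
    rw [Matrix.det_mul, Matrix.det_mul, Matrix.det_transpose]
  have hGentry : ∀ i j, (P * A * Pᵀ) i j = (P i) ⬝ᵥ A.mulVec (P j) := by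
    intro i j
    simp [Matrix.mul_apply, Matrix.mulVec, dotProduct, Finset.mul_sum, Finset.sum_mul]
    rw [Finset.sum_comm]
    congr 1; ext k; congr 1; ext l; ring
  have hsd : ∀ v z : Fin 3 → ℝ, v ⬝ᵥ A.mulVec z = z ⬝ᵥ A.mulVec v := by
    intro v z
    rw [Matrix.dotProduct_mulVec, ← Matrix.mulVec_transpose, hA.eq, dotProduct_comm]
  have hP0 : P 0 = x := rfl
  have hP1 : P 1 = w := rfl
  have hP2 : P 2 = u := rfl
  have hDG : (P * A * Pᵀ).det = -(4 * (x ⬝ᵥ A.mulVec u) ^ 2) := by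
    rw [Matrix.det_fin_three, hGentry, hGentry, hGentry, hGentry, hGentry, hGentry, hGentry,
      hGentry, hGentry, hP0, hP1, hP2, hx, hxw, hw, hsd w x, hsd u x, hsd u w, hxw]
    ring
  have hkey : (u 0 ^ 2 + u 1 ^ 2 + u 2 ^ 2) ^ 2 * A.det = -(4 * (x ⬝ᵥ A.mulVec u) ^ 2) := by
    rw [← hDG, hG, hdetP]; ring
  have h1 : (u 0 ^ 2 + u 1 ^ 2 + u 2 ^ 2) ^ 2 * A.det = 0 :=
    le_antisymm (by nlinarith [sq_nonneg (x ⬝ᵥ A.mulVec u)])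
      (mul_nonneg (sq_nonneg _) hdet.le)
  have hs0 : u 0 ^ 2 + u 1 ^ 2 + u 2 ^ 2 = 0 :=
    pow_eq_zero_iff two_ne_zero |>.mp ((mul_eq_zero.mp h1).resolve_right hdet.ne')
  have hz0 : u 0 = 0 := pow_eq_zero_iff two_ne_zero |>.mp
    (le_antisymm (by linarith [sq_nonneg (u 1), sq_nonneg (u 2)]) (sq_nonneg _))
  have hz1 : u 1 = 0 := pow_eq_zero_iff two_ne_zero |>.mp
    (le_antisymm (by linarith [sq_nonneg (u 0), sq_nonneg (u 2)]) (sq_nonneg _))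
  have hz2 : u 2 = 0 := pow_eq_zero_iff two_ne_zero |>.mp
    (le_antisymm (by linarith [sq_nonneg (u 0), sq_nonneg (u 1)]) (sq_nonneg _))
  have hu0 : x 1 * w 2 - x 2 * w 1 = 0 := by simpa [hu] using hz0
  have hu1 : x 2 * w 0 - x 0 * w 2 = 0 := by simpa [hu] using hz1
  have hu2 : x 0 * w 1 - x 1 * w 0 = 0 := by simpa [hu] using hz2
  have hxw' : x 0 * (A 0 0 * w 0 + A 0 1 * w 1 + A 0 2 * w 2)
      + x 1 * (A 1 0 * w 0 + A 1 1 * w 1 + A 1 2 * w 2)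
      + x 2 * (A 2 0 * w 0 + A 2 1 * w 1 + A 2 2 * w 2) = 0 := by
    simpa [dotProduct, Matrix.mulVec, Fin.sum_univ_three, mul_add, add_assoc] using hxw
  have hw' : w 0 * (A 0 0 * w 0 + A 0 1 * w 1 + A 0 2 * w 2)
      + w 1 * (A 1 0 * w 0 + A 1 1 * w 1 + A 1 2 * w 2)
      + w 2 * (A 2 0 * w 0 + A 2 1 * w 1 + A 2 2 * w 2) = 4 := by
    simpa [dotProduct, Matrix.mulVec, Fin.sum_univ_three, mul_add, add_assoc] using hw
  funext i
  fin_cases i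
  · show x 0 = 0
    linear_combination (-(x 0) / 4) * hw' + (w 0 / 4) * hxw'
      + ((A 1 0 * w 0 + A 1 1 * w 1 + A 1 2 * w 2) / 4) * hu2
      + (-(A 2 0 * w 0 + A 2 1 * w 1 + A 2 2 * w 2) / 4) * hu1
  · show x 1 = 0
    linear_combination (-(x 1) / 4) * hw' + (w 1 / 4) * hxw'
      + (-(A 0 0 * w 0 + A 0 1 * w 1 + A 0 2 * w 2) / 4) * hu2
      + ((A 2 0 * w 0 + A 2 1 * w 1 + A 2 2 * w 2) / 4) * hu0
  · show x 2 = 0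
    linear_combination (-(x 2) / 4) * hw' + (w 2 / 4) * hxw'
      + ((A 0 0 * w 0 + A 0 1 * w 1 + A 0 2 * w 2) / 4) * hu1
      + (-(A 1 0 * w 0 + A 1 1 * w 1 + A 1 2 * w 2) / 4) * hu0

private lemma qf_homog (A : Matrix (Fin 3) (Fin 3) ℝ) (s : ℝ) (v : Fin 3 → ℝ) :
    (s • v) ⬝ᵥ A.mulVec (s • v) = s ^ 2 * (v ⬝ᵥ A.mulVec v) := by
  rw [Matrix.mulVec_smul, smul_dotProduct, dotProduct_smul, smul_eq_mul,
    smul_eq_mul]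
  ring

private lemma bound_aux (A : Matrix (Fin 3) (Fin 3) ℝ) (hA : A.IsSymm) (hdet : 0 < A.det)
    (y : Fin 3 → ℝ) (w : Fin 3 → ℝ) (hw1 : A.mulVec w = y) (hw2 : w ⬝ᵥ A.mulVec w = 4) :
    ∃ c > 0, ∀ v : Fin 3 → ℝ, v ⬝ᵥ A.mulVec v = 0 → c * ‖v‖ ≤ |v ⬝ᵥ y| := by
  have keyv : ∀ v : Fin 3 → ℝ, v ⬝ᵥ A.mulVec v = 0 → v ⬝ᵥ y = 0 → v = 0 := by
    intro v h1 h2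
    exact key_aux A hA hdet v w h1 (by rw [hw1]; exact h2) hw2
  have hf : Continuous fun v : Fin 3 → ℝ => v ⬝ᵥ A.mulVec v := by
    simp only [dotProduct, Matrix.mulVec, Fin.sum_univ_three]
    fun_prop
  have hg : Continuous fun v : Fin 3 → ℝ => v ⬝ᵥ y := by
    simp only [dotProduct, Fin.sum_univ_three]
    fun_prop
  set C : Set (Fin 3 → ℝ) :=
    Metric.sphere (0 : Fin 3 → ℝ) 1 ∩ {v | v ⬝ᵥ A.mulVec v = 0} with hC
  have hCc : IsCompact C :=
    (isCompact_sphere 0 1).inter_right (isClosed_eq hf continuous_const)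
  have memC : ∀ v : Fin 3 → ℝ, v ≠ 0 → v ⬝ᵥ A.mulVec v = 0 → (‖v‖⁻¹ • v) ∈ C := by
    intro v hv h0
    constructor
    · simpa [RCLike.ofReal_real_eq_id] using norm_smul_inv_norm (𝕜 := ℝ) hv
    · show (‖v‖⁻¹ • v) ⬝ᵥ A.mulVec (‖v‖⁻¹ • v) = 0
      rw [qf_homog, h0, mul_zero]
  rcases C.eq_empty_or_nonempty with hCe | hCne
  · refine ⟨1, one_pos, fun v h0 => ?_⟩
    have hv : v = 0 := by
      by_contra hv
      exact (Set.eq_empty_iff_forall_notMem.mp hCe _) (memC v hv h0)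
    simp [hv]
  · obtain ⟨v₀, hv₀C, hmin⟩ := hCc.exists_isMinOn hCne
      ((continuous_abs.comp hg).continuousOn)
    have hv₀ne : v₀ ≠ 0 := by
      intro h
      have := hv₀C.1
      rw [h] at this
      simp at this
    have hcpos : 0 < |v₀ ⬝ᵥ y| := by
      exact abs_pos.mpr fun h => hv₀ne (keyv v₀ hv₀C.2 h)
    refine ⟨|v₀ ⬝ᵥ y|, hcpos, fun v h0 => ?_⟩
    rcases eq_or_ne v 0 with hv | hv
    · simp [hv]
    · have hnv : 0 < ‖v‖ := norm_pos_iff.mpr hv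
      have h1 : |v₀ ⬝ᵥ y| ≤ |(‖v‖⁻¹ • v) ⬝ᵥ y| := hmin (memC v hv h0)
      rw [smul_dotProduct, smul_eq_mul, abs_mul, abs_inv, abs_norm] at h1
      calc |v₀ ⬝ᵥ y| * ‖v‖ ≤ (‖v‖⁻¹ * |v ⬝ᵥ y|) * ‖v‖ := by
            exact mul_le_mul_of_nonneg_right h1 hnv.le
        _ = |v ⬝ᵥ y| := by field_simp

end AuxStrip

/-- For `S` nonsingular with `D = det S > 0`, `y ∈ ℝ³` with `S*(y) = 4D`,
and any `T > 0`, there are only finitely many primitive `x ∈ ℤ³` with `S(x) = 0` and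
`0 < x yᵀ ≤ T`. -/
theorem finitely_many_zeros_in_strip
    (S : M3) (hsymm : S.IsSymm) (hD : 0 < S.det)
    (y : Fin 3 → ℝ) (hy : QF (S.adjugate.map (Int.cast : ℤ → ℝ)) y = 4 * (S.det : ℝ))
    (T : ℝ) (hT : 0 < T) :
    {x : Fin 3 → ℤ | PrimVec x ∧ QF S x = 0 ∧ 0 < dotR x y ∧ dotR x y ≤ T}.Finite := by
  classical
  set Aℝ : Matrix (Fin 3) (Fin 3) ℝ := S.map (Int.cast : ℤ → ℝ) with hAdef
  have hAsymm : Aℝ.IsSymm := hsymm.map _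
  have hdetA : Aℝ.det = (S.det : ℝ) := by
    rw [hAdef]
    exact ((Int.castRingHom ℝ).map_det S).symm
  have hdetpos : 0 < Aℝ.det := by rw [hdetA]; exact_mod_cast hD
  have hdne : (S.det : ℝ) ≠ 0 := by exact_mod_cast hD.ne'
  have hadj : S.adjugate.map (Int.cast : ℤ → ℝ) = Aℝ.adjugate :=
    (Int.castRingHom ℝ).map_adjugate S
  have hy' : y ⬝ᵥ Aℝ.adjugate.mulVec y = 4 * (S.det : ℝ) := by
    rw [← hadj]; exact hy
  set w : Fin 3 → ℝ := (S.det : ℝ)⁻¹ • (Aℝ.adjugate.mulVec y) with hwdef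
  have hw1 : Aℝ.mulVec w = y := by
    rw [hwdef, Matrix.mulVec_smul, Matrix.mulVec_mulVec, Matrix.mul_adjugate, hdetA,
      Matrix.smul_mulVec, Matrix.one_mulVec, smul_smul, inv_mul_cancel₀ hdne, one_smul]
  have hw2 : w ⬝ᵥ Aℝ.mulVec w = 4 := by
    rw [hw1, hwdef, smul_dotProduct, smul_eq_mul, dotProduct_comm, hy']
    field_simp
  obtain ⟨c, hc, hbound⟩ := bound_aux Aℝ hAsymm hdetpos y w hw1 hw2
  set M : ℤ := ⌈T / c⌉ with hM
  apply Set.Finite.subset (Set.Finite.pi fun _ : Fin 3 => Set.finite_Icc (-M) M)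
  rintro x ⟨hprim, hQF, hpos, hle⟩
  set v : Fin 3 → ℝ := fun i => (x i : ℝ) with hv
  have hfv : v ⬝ᵥ Aℝ.mulVec v = 0 := by
    have h1 : ((x ⬝ᵥ S.mulVec x : ℤ) : ℝ) = v ⬝ᵥ Aℝ.mulVec v := by
      simp only [hAdef, hv, dotProduct, Matrix.mulVec, Fin.sum_univ_three,
        Matrix.map_apply]
      push_cast
      ring
    rw [← h1]
    have h2 : x ⬝ᵥ S.mulVec x = 0 := hQF
    rw [h2, Int.cast_zero]
  have hgv : v ⬝ᵥ y = dotR x y := by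
    simp [dotR, hv, dotProduct]
  have hcb : c * ‖v‖ ≤ T := by
    have hb := hbound v hfv
    rw [hgv, abs_of_pos hpos] at hb
    linarith
  have hnb : ‖v‖ ≤ T / c := by
    rw [le_div_iff₀ hc]
    nlinarith
  refine Set.mem_pi.mpr fun i _ => ?_
  have h1 : |(x i : ℝ)| ≤ T / c := by
    have := norm_le_pi_norm v i
    rw [Real.norm_eq_abs] at this
    exact le_trans (by simpa [hv] using this) hnb
  have h2 : ((|x i| : ℤ) : ℝ) ≤ (M : ℝ) := by
    rw [Int.cast_abs]
    exact le_trans h1 (Int.le_ceil _)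
  have h3 : |x i| ≤ M := by exact_mod_cast h2
  exact Set.mem_Icc.mpr (abs_le.mp h3)
end

section
/- Let S be a primitive nonsingular symmetric 3×3 integer matrix with det S = D > 0, and let −Ω be the gcd of the 2×2 minors of S (with Ω < 0). Then Ω² divides D; that is, D = Ω²Δ for a positive integer Δ, and Δ equals the gcd of the entries of the adjugate of the primitive adjugate S† = Ω⁻¹S*. -/
open Matrix Filter Topology
open scoped BigOperators

set_option maxHeartbeats 1000000 in
/-- For primitive nonsingular `S` with `D = det S > 0` and `−Ω` the gcd of
the 2×2 minors of `S`: `Ω²` divides `D`, the quotient `Δ = D/Ω²` is positive, and `Δ` equals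
the gcd of the entries of the adjugate of the primitive adjugate `S† = Ω⁻¹S*`. -/
theorem omega_sq_dvd_det
    (S : M3) (hsymm : S.IsSymm) (hprim : PrimForm S) (hD : 0 < S.det) :
    OmegaInv S ^ 2 ∣ S.det ∧ 0 < S.det / OmegaInv S ^ 2 ∧
    (Finset.univ.gcd fun ij : Fin 3 × Fin 3 =>
        (Matrix.adjugate (Matrix.of fun i j => S.adjugate i j / OmegaInv S)) ij.1 ij.2) =
      S.det / OmegaInv S ^ 2 := by
  set g : ℤ := Finset.univ.gcd (fun ij : Fin 3 × Fin 3 => S.adjugate ij.1 ij.2) with hg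
  have hΩ : OmegaInv S = -g := rfl
  have hgdvd : ∀ i j, g ∣ S.adjugate i j := fun i j =>
    Finset.gcd_dvd (Finset.mem_univ ((i, j) : Fin 3 × Fin 3))
  set T : M3 := Matrix.of (fun i j => S.adjugate i j / g) with hT
  have hgT : g • T = S.adjugate := by
    ext i j
    exact Int.mul_ediv_cancel' (hgdvd i j)
  have hadj2 : S.adjugate.adjugate = S.det • S := by
    rw [Matrix.adjugate_adjugate S (by simp)]
    simp
  have key : g ^ 2 • T.adjugate = S.det • S := by
    have h := Matrix.adjugate_smul g T
    rw [hgT, hadj2] at h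
    rw [h]
    norm_num
  have hgne : g ≠ 0 := by
    intro h0
    have hadj0 : S.adjugate = 0 := by
      ext i j
      have := hgdvd i j
      rw [h0] at this
      exact zero_dvd_iff.mp this
    have hm := Matrix.mul_adjugate S
    rw [hadj0] at hm
    have := congrFun (congrFun hm.symm 0) 0
    simp [Matrix.one_apply] at this
    omega
  have hGS : (Finset.univ.gcd fun ij : Fin 3 × Fin 3 => S ij.1 ij.2) ∣ 1 := by
    have hd : ∀ i j : Fin 3, (Finset.univ.gcd fun ij : Fin 3 × Fin 3 => S ij.1 ij.2) ∣ S i j :=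
      fun i j => Finset.gcd_dvd (Finset.mem_univ ((i, j) : Fin 3 × Fin 3))
    have : (Finset.univ.gcd fun ij : Fin 3 × Fin 3 => S ij.1 ij.2) ∣
        (↑(Int.gcd (S 0 0) (Int.gcd (S 1 1) (Int.gcd (S 2 2)
          (Int.gcd (S 0 1) (Int.gcd (S 1 2) (S 0 2)))))) : ℤ) :=
      Int.dvd_coe_gcd (hd 0 0) (Int.dvd_coe_gcd (hd 1 1) (Int.dvd_coe_gcd (hd 2 2)
        (Int.dvd_coe_gcd (hd 0 1) (Int.dvd_coe_gcd (hd 1 2) (hd 0 2)))))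
    rwa [hprim] at this
  have hdvdD : g ^ 2 ∣ S.det := by
    have h1 : ∀ ij : Fin 3 × Fin 3, g ^ 2 ∣ S.det * S ij.1 ij.2 := by
      intro ij
      have := congrFun (congrFun key ij.1) ij.2
      exact ⟨T.adjugate ij.1 ij.2, this.symm⟩
    have h2 : g ^ 2 ∣ Finset.univ.gcd (fun ij : Fin 3 × Fin 3 => S.det * S ij.1 ij.2) :=
      Finset.dvd_gcd (fun ij _ => h1 ij)
    rw [Finset.gcd_mul_left] at h2
    have h3 : normalize S.det * (Finset.univ.gcd fun ij : Fin 3 × Fin 3 => S ij.1 ij.2) ∣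
        normalize S.det * 1 := mul_dvd_mul_left _ hGS
    have h4 : g ^ 2 ∣ normalize S.det := dvd_trans h2 (by simpa using h3)
    have h5 : normalize S.det = S.det := Int.normalize_of_nonneg hD.le
    rwa [h5] at h4
  obtain ⟨Δ, hΔ⟩ := hdvdD
  have hg2ne : g ^ 2 ≠ 0 := pow_ne_zero _ hgne
  have hg2pos : 0 < g ^ 2 := lt_of_le_of_ne (sq_nonneg g) (Ne.symm hg2ne)
  have hΩsq : OmegaInv S ^ 2 = g ^ 2 := by rw [hΩ]; ring
  have hdivD : S.det / OmegaInv S ^ 2 = Δ := by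
    rw [hΩsq, hΔ, Int.mul_ediv_cancel_left _ hg2ne]
  have hΔpos : 0 < Δ := by nlinarith
  have hadjT : T.adjugate = Δ • S := by
    have h2 : g ^ 2 • T.adjugate = g ^ 2 • (Δ • S) := by
      rw [key, hΔ, smul_smul]
    ext i j
    have := congrFun (congrFun h2 i) j
    simp only [Matrix.smul_apply, smul_eq_mul] at this ⊢
    exact mul_left_cancel₀ hg2ne this
  have hM : (Matrix.of fun i j => S.adjugate i j / OmegaInv S) = (-1 : ℤ) • T := by
    ext i j
    simp only [Matrix.of_apply, hΩ, Matrix.smul_apply, smul_eq_mul, hT]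
    rw [Int.ediv_neg]
    ring
  have hadjM : (Matrix.adjugate (Matrix.of fun i j => S.adjugate i j / OmegaInv S)) =
      T.adjugate := by
    rw [hM, Matrix.adjugate_smul]
    norm_num
  have hGS1 : (Finset.univ.gcd fun ij : Fin 3 × Fin 3 => S ij.1 ij.2) = 1 := by
    have hnn : 0 ≤ (Finset.univ.gcd fun ij : Fin 3 × Fin 3 => S ij.1 ij.2) := by
      have := Finset.normalize_gcd (s := (Finset.univ : Finset (Fin 3 × Fin 3)))
        (f := fun ij : Fin 3 × Fin 3 => S ij.1 ij.2)
      rw [← this, ← Int.abs_eq_normalize]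
      exact abs_nonneg _
    exact Int.eq_one_of_dvd_one hnn hGS
  refine ⟨hΩsq ▸ ⟨Δ, hΔ⟩, ?_, ?_⟩
  · rw [hdivD]; exact hΔpos
  · rw [hadjM, hadjT, hdivD]
    have : (Finset.univ.gcd fun ij : Fin 3 × Fin 3 => (Δ • S) ij.1 ij.2) =
        Finset.univ.gcd fun ij : Fin 3 × Fin 3 => Δ * S ij.1 ij.2 := rfl
    rw [this, Finset.gcd_mul_left, hGS1, Int.normalize_of_nonneg hΔpos.le, mul_one]
end

section
/- Let S be a special integral ternary quadratic form with D = det S > 0, Ω and Δ its invariants, and N = gcd(−Ω, Δ). Define N₅ = gcd(N, −Ω/N), N₄ = gcd(N, Δ/N), N₃ = N/(N₄N₅), N₂ = −Ω/(N·N₅), N₁ = Δ/(N·N₄). Then N₁, N₂, N₃, N₄, N₅ are positive, squarefree, pairwise relatively prime integers satisfying N = N₃N₄N₅, Ω = −N₅²N₄N₃N₂, Δ = N₄²N₅N₃N₁, and D = N₁N₂²N₃³N₄⁴N₅⁵. -/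
open Matrix Filter Topology
open scoped BigOperators

private lemma unit_gcd_coprime {x y : ℤ} (h : IsUnit ((Int.gcd x y : ℕ) : ℤ)) : IsCoprime x y := by
  rw [Int.isCoprime_iff_gcd_eq_one]
  rcases Int.isUnit_iff.mp h with h | h <;> omega

private lemma key_nt (m d : ℤ) (hm : 0 < m) (hd : 0 < d)
    (N N1 N2 N3 N4 N5 : ℤ)
    (hN : N = (Int.gcd m d : ℤ))
    (hN5 : N5 = (Int.gcd N (m / N) : ℤ))
    (hN4 : N4 = (Int.gcd N (d / N) : ℤ))
    (hN3 : N3 = N / (N4 * N5))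
    (hN2 : N2 = m / (N * N5))
    (hN1 : N1 = d / (N * N4))
    (hNsf : Squarefree N) (hasf : Squarefree (m / N)) (hbsf : Squarefree (d / N)) :
    (0 < N1 ∧ 0 < N2 ∧ 0 < N3 ∧ 0 < N4 ∧ 0 < N5) ∧
    (Squarefree N1 ∧ Squarefree N2 ∧ Squarefree N3 ∧ Squarefree N4 ∧ Squarefree N5) ∧
    List.Pairwise IsCoprime [N1, N2, N3, N4, N5] ∧
    N = N3 * N4 * N5 ∧ m = N5 ^ 2 * N4 * N3 * N2 ∧ d = N4 ^ 2 * N5 * N3 * N1 := by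
  have hN0 : 0 < N := by
    rw [hN]
    have : Int.gcd m d ≠ 0 := fun h => by
      rw [Int.gcd_eq_zero_iff] at h; omega
    exact_mod_cast Nat.pos_of_ne_zero this
  have hNm : N ∣ m := hN ▸ Int.gcd_dvd_left _ _
  have hNd : N ∣ d := hN ▸ Int.gcd_dvd_right _ _
  set a := m / N with ha'
  set b := d / N with hb'
  have hma : m = N * a := (Int.mul_ediv_cancel' hNm).symm
  have hdb : d = N * b := (Int.mul_ediv_cancel' hNd).symm
  have ha0 : 0 < a := by
    rcases mul_pos_iff.mp (hma ▸ hm) with ⟨_, h⟩ | ⟨h, _⟩; exact h; omega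
  have hb0 : 0 < b := by
    rcases mul_pos_iff.mp (hdb ▸ hd) with ⟨_, h⟩ | ⟨h, _⟩; exact h; omega
  -- a, b coprime
  have hab : IsCoprime a b := by
    rw [Int.isCoprime_iff_gcd_eq_one]
    have h1 : Int.gcd m d = N.natAbs * Int.gcd a b := by
      rw [hma, hdb, Int.gcd_mul_left]
    have h2 : (N.natAbs : ℤ) = N := Int.natAbs_of_nonneg hN0.le
    have h3 : N.natAbs = Int.gcd m d := by omega
    have h4 : 0 < N.natAbs := by omega
    nlinarith [h1, h3, h4, Nat.zero_le (Int.gcd a b)]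
  have hN5N : N5 ∣ N := hN5 ▸ Int.gcd_dvd_left _ _
  have hN5a : N5 ∣ a := hN5 ▸ Int.gcd_dvd_right _ _
  have hN4N : N4 ∣ N := hN4 ▸ Int.gcd_dvd_left _ _
  have hN4b : N4 ∣ b := hN4 ▸ Int.gcd_dvd_right _ _
  have c45 : IsCoprime N4 N5 :=
    (hab.symm.of_isCoprime_of_dvd_left hN4b).of_isCoprime_of_dvd_right hN5a
  have h45N : N4 * N5 ∣ N := c45.mul_dvd hN4N hN5N
  have hNeq : N = N3 * (N4 * N5) := by
    rw [hN3]; exact (Int.ediv_mul_cancel h45N).symm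
  have hN50 : 0 < N5 := by
    rw [hN5]
    have : Int.gcd N a ≠ 0 := fun h => by rw [Int.gcd_eq_zero_iff] at h; omega
    exact_mod_cast Nat.pos_of_ne_zero this
  have hN40 : 0 < N4 := by
    rw [hN4]
    have : Int.gcd N b ≠ 0 := fun h => by rw [Int.gcd_eq_zero_iff] at h; omega
    exact_mod_cast Nat.pos_of_ne_zero this
  have hN30 : 0 < N3 := by
    rcases mul_pos_iff.mp (hNeq ▸ hN0) with ⟨h, _⟩ | ⟨_, h⟩; exact h; nlinarith
  -- split squarefree N
  obtain ⟨crp3, sf3, sfN45⟩ := squarefree_mul_iff.mp (hNeq ▸ hNsf)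
  obtain ⟨crp45, sf4, sf5⟩ := squarefree_mul_iff.mp sfN45
  have c3_45 : IsCoprime N3 (N4 * N5) := isRelPrime_iff_isCoprime.mp crp3
  have c34 : IsCoprime N3 N4 := c3_45.of_isCoprime_of_dvd_right ⟨N5, rfl⟩
  have c35 : IsCoprime N3 N5 := c3_45.of_isCoprime_of_dvd_right ⟨N4, mul_comm _ _⟩
  -- a = N5 * N2
  have hN2a : N2 = a / N5 := by
    rw [hN2, hma, Int.mul_ediv_mul_of_pos _ _ hN0]
  have haeq : a = N5 * N2 := by rw [hN2a]; exact (Int.mul_ediv_cancel' hN5a).symm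
  obtain ⟨crp52, sf5', sf2⟩ := squarefree_mul_iff.mp (haeq ▸ hasf)
  have c52 : IsCoprime N5 N2 := isRelPrime_iff_isCoprime.mp crp52
  have hN20 : 0 < N2 := by
    rcases mul_pos_iff.mp (haeq ▸ ha0) with ⟨_, h⟩ | ⟨h, _⟩; exact h; nlinarith
  -- b = N4 * N1
  have hN1b : N1 = b / N4 := by
    rw [hN1, hdb, Int.mul_ediv_mul_of_pos _ _ hN0]
  have hbeq : b = N4 * N1 := by rw [hN1b]; exact (Int.mul_ediv_cancel' hN4b).symm
  obtain ⟨crp41, sf4', sf1⟩ := squarefree_mul_iff.mp (hbeq ▸ hbsf)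
  have c41 : IsCoprime N4 N1 := isRelPrime_iff_isCoprime.mp crp41
  have hN10 : 0 < N1 := by
    rcases mul_pos_iff.mp (hbeq ▸ hb0) with ⟨_, h⟩ | ⟨h, _⟩; exact h; nlinarith
  have hN2diva : N2 ∣ a := ⟨N5, by rw [haeq]; ring⟩
  have hN1divb : N1 ∣ b := ⟨N4, by rw [hbeq]; ring⟩
  -- remaining coprimalities
  have c12 : IsCoprime N1 N2 :=
    (hab.symm.of_isCoprime_of_dvd_left hN1divb).of_isCoprime_of_dvd_right hN2diva
  have hN3N : N3 ∣ N := ⟨N4 * N5, hNeq⟩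
  have c13 : IsCoprime N1 N3 := by
    apply unit_gcd_coprime
    refine c34.symm.isUnit_of_dvd' ?_ (Int.gcd_dvd_right _ _)
    rw [hN4]
    exact Int.dvd_coe_gcd ((Int.gcd_dvd_right _ _).trans hN3N) ((Int.gcd_dvd_left _ _).trans hN1divb)
  have c23 : IsCoprime N2 N3 := by
    apply unit_gcd_coprime
    refine c35.symm.isUnit_of_dvd' ?_ (Int.gcd_dvd_right _ _)
    rw [hN5]
    exact Int.dvd_coe_gcd ((Int.gcd_dvd_right _ _).trans hN3N) ((Int.gcd_dvd_left _ _).trans hN2diva)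
  have c14 : IsCoprime N1 N4 := c41.symm
  have c15 : IsCoprime N1 N5 :=
    (hab.symm.of_isCoprime_of_dvd_left hN1divb).of_isCoprime_of_dvd_right hN5a
  have c24 : IsCoprime N2 N4 :=
    (hab.of_isCoprime_of_dvd_left hN2diva).of_isCoprime_of_dvd_right hN4b
  have c25 : IsCoprime N2 N5 := c52.symm
  refine ⟨⟨hN10, hN20, hN30, hN40, hN50⟩, ⟨sf1, sf2, sf3, sf4, sf5⟩, ?_,
    by rw [hNeq]; ring, by rw [hma, hNeq, haeq]; ring, by rw [hdb, hNeq, hbeq]; ring⟩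
  simp only [List.pairwise_cons, List.mem_cons, List.mem_singleton, List.not_mem_nil,
    List.Pairwise.nil]
  refine ⟨?_, ?_, ?_, ?_, fun _ h => h.elim, trivial⟩
  · rintro x (rfl | rfl | rfl | rfl | h)
    exacts [c12, c13, c14, c15, h.elim]
  · rintro x (rfl | rfl | rfl | h)
    exacts [c23, c24, c25, h.elim]
  · rintro x (rfl | rfl | h)
    exacts [c34, c35, h.elim]
  · rintro x (rfl | h)
    exacts [c45, h.elim]

set_option maxHeartbeats 1000000 in
/-- equations (3.2)–(3.4). For special `S`, the invariants
`N₁,…,N₅` are positive, squarefree, pairwise coprime, and satisfy `N = N₃N₄N₅`,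
`Ω = −N₅²N₄N₃N₂`, `Δ = N₄²N₅N₃N₁` and `D = N₁N₂²N₃³N₄⁴N₅⁵`. -/
theorem invariant_factorization
    (S : M3) (hsymm : S.IsSymm) (hspec : IsSpecial S) :
    (0 < N1v S ∧ 0 < N2v S ∧ 0 < N3v S ∧ 0 < N4v S ∧ 0 < N5v S) ∧
    (Squarefree (N1v S) ∧ Squarefree (N2v S) ∧ Squarefree (N3v S) ∧
      Squarefree (N4v S) ∧ Squarefree (N5v S)) ∧
    List.Pairwise IsCoprime [N1v S, N2v S, N3v S, N4v S, N5v S] ∧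
    Nval S = N3v S * N4v S * N5v S ∧
    OmegaInv S = -(N5v S ^ 2 * N4v S * N3v S * N2v S) ∧
    DeltaInv S = N4v S ^ 2 * N5v S * N3v S * N1v S ∧
    S.det = N1v S * N2v S ^ 2 * N3v S ^ 3 * N4v S ^ 4 * N5v S ^ 5 := by
  obtain ⟨hprim, -, hD, hNsf, hasf, hbsf⟩ := hspec
  set g : ℤ := Finset.univ.gcd (fun ij : Fin 3 × Fin 3 => S.adjugate ij.1 ij.2) with hg
  have hΩ : OmegaInv S = -g := rfl
  have hgdvd : ∀ i j, g ∣ S.adjugate i j := fun i j => Finset.gcd_dvd (Finset.mem_univ (i, j))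
  have hgne : g ≠ 0 := by
    intro h
    have hadj : S.adjugate = 0 := by
      ext i j
      exact Finset.gcd_eq_zero_iff.mp (hg ▸ h) (i, j) (Finset.mem_univ _)
    have h2 := Matrix.det_adjugate S
    rw [hadj, Matrix.det_zero] at h2
    have : S.det ^ (Fintype.card (Fin 3) - 1) ≠ 0 := pow_ne_zero _ hD.ne'
    exact this h2.symm
  have hgpos : 0 < g := by
    have h1 : |g| = g := by rw [Int.abs_eq_normalize, hg]; exact Finset.normalize_gcd
    rcases abs_cases g with ⟨h, _⟩ | ⟨h, _⟩ <;> omega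
  have hsq : ∀ i j, g ^ 2 ∣ S.det * S i j := by
    have hkey : S.det • S = S.adjugate.adjugate := by
      rw [Matrix.adjugate_adjugate S (by simp)]; norm_num
    intro i j
    have h2 : S.det * S i j = S.adjugate.adjugate i j := by
      rw [← hkey]; simp [Matrix.smul_apply]
    have H : ∀ x y z w : ℤ, g ∣ x → g ∣ y → g ∣ z → g ∣ w → g ^ 2 ∣ x * y - z * w := by
      intro x y z w hx hy hz hw
      have := dvd_sub (mul_dvd_mul hx hy) (mul_dvd_mul hz hw)
      rwa [← sq] at this
    have H' : ∀ x y z w : ℤ, g ∣ x → g ∣ y → g ∣ z → g ∣ w → g ^ 2 ∣ -(x * y) + z * w := by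
      intro x y z w hx hy hz hw
      rw [neg_add_eq_sub]
      exact H _ _ _ _ hz hw hx hy
    rw [h2, Matrix.adjugate_fin_three]
    fin_cases i <;> fin_cases j <;>
      simp only [Matrix.cons_val', Matrix.cons_val_zero, Matrix.cons_val_one, Matrix.head_cons,
        Matrix.empty_val', Matrix.cons_val_fin_one, Matrix.head_fin_const, Fin.isValue,
        Matrix.cons_val_two, Matrix.tail_cons, Matrix.of_apply] <;>
      first
        | exact H _ _ _ _ (hgdvd _ _) (hgdvd _ _) (hgdvd _ _) (hgdvd _ _)
        | exact H' _ _ _ _ (hgdvd _ _) (hgdvd _ _) (hgdvd _ _) (hgdvd _ _)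
  have hDg : g ^ 2 ∣ S.det := by
    have hp : Int.gcd (S 0 0) (Int.gcd (S 1 1) (Int.gcd (S 2 2)
        (Int.gcd (S 0 1) (Int.gcd (S 1 2) (S 0 2))))) = 1 := hprim
    set c : ℤ := Finset.univ.gcd (fun ij : Fin 3 × Fin 3 => S ij.1 ij.2) with hc
    have hcd : ∀ i j, c ∣ S i j := fun i j => Finset.gcd_dvd (Finset.mem_univ (i, j))
    have h9 : c ∣ 1 := by
      have h6 : c ∣ ((Int.gcd (S 0 0) (Int.gcd (S 1 1) (Int.gcd (S 2 2)
          (Int.gcd (S 0 1) (Int.gcd (S 1 2) (S 0 2))))) : ℕ) : ℤ) := by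
        repeat' apply Int.dvd_coe_gcd
        all_goals exact hcd _ _
      rw [hp] at h6
      exact_mod_cast h6
    have hbig : g ^ 2 ∣ Finset.univ.gcd (fun ij : Fin 3 × Fin 3 => S.det * S ij.1 ij.2) :=
      Finset.dvd_gcd (fun ij _ => hsq ij.1 ij.2)
    rw [Finset.gcd_mul_left, Int.normalize_of_nonneg hD.le, ← hc] at hbig
    exact hbig.trans (by simpa using mul_dvd_mul_left S.det h9)
  have hΩsq : OmegaInv S ^ 2 = g ^ 2 := by rw [hΩ]; ring
  have hdet : S.det = g ^ 2 * DeltaInv S := by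
    rw [DeltaInv, hΩsq]; exact (Int.mul_ediv_cancel' hDg).symm
  have hdpos : 0 < DeltaInv S := by
    have h0 : 0 < g ^ 2 * DeltaInv S := hdet ▸ hD
    rcases mul_pos_iff.mp h0 with ⟨_, h⟩ | ⟨h, _⟩
    · exact h
    · nlinarith [sq_nonneg g]
  have hNdef : Nval S = (Int.gcd g (DeltaInv S) : ℤ) := by
    rw [Nval, hΩ]; simp [Int.gcd]
  have hN5def : N5v S = (Int.gcd (Nval S) (g / Nval S) : ℤ) := by
    rw [N5v, hΩ, neg_neg]
  have hN2def : N2v S = g / (Nval S * N5v S) := by rw [N2v, hΩ, neg_neg]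
  rw [hΩ, neg_neg] at hasf
  obtain ⟨hpos, hsf, hpw, he1, he2, he3⟩ :=
    key_nt g (DeltaInv S) hgpos hdpos (Nval S) (N1v S) (N2v S) (N3v S) (N4v S) (N5v S)
      hNdef hN5def rfl rfl hN2def rfl hNsf hasf hbsf
  refine ⟨hpos, hsf, hpw, he1, by rw [hΩ, he2], he3, ?_⟩
  rw [hdet, he2, he3]; ring
end

section
/- Let S be a special integral ternary quadratic form and suppose M ∈ SL₃(ℤ) is such that MᵀSM = S₁ = [[0, 0, a], [0, −b, c], [a, c, d]] with a, b > 0. Then necessarily a = N₃N₅N₄²N₂, b = N₃N₅³N₁, and N₃N₅ divides c, where N₁,…,N₅ are the invariants of S defined by N₅ = gcd(N, −Ω/N), N₄ = gcd(N, Δ/N), N₃ = N/(N₄N₅), N₂ = −Ω/(N·N₅), N₁ = Δ/(N·N₄). -/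
open Matrix Filter Topology
open scoped BigOperators

/-! ### Auxiliary lemmas for the proof -/

section StatementFifteenAux

lemma dvd_cancel_pow' (p : ℕ) (hp : p.Prime) {a c : ℤ} {α k : ℕ}
    (hd : (p:ℤ)^α ∣ a) (hn : ¬ (p:ℤ)^(α+1) ∣ a) (h : (p:ℤ)^k ∣ a * c) :
    (p:ℤ)^(k - α) ∣ c := by
  obtain ⟨a', rfl⟩ := hd
  have hpa' : ¬ (p:ℤ) ∣ a' := fun hdvd => hn (by rw [pow_succ]; exact mul_dvd_mul_left _ hdvd)
  rcases le_or_gt k α with hk | hk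
  · simp [Nat.sub_eq_zero_of_le hk]
  · have h2 : (p:ℤ)^(k-α) ∣ a' * c := by
      have hfact : (p:ℤ)^k = (p:ℤ)^α * (p:ℤ)^(k-α) := by rw [← pow_add]; congr 1; omega
      rw [hfact, mul_assoc] at h
      exact (mul_dvd_mul_iff_left (pow_ne_zero α (by exact_mod_cast hp.ne_zero : (p:ℤ) ≠ 0))).mp h
    have hcop : IsCoprime ((p:ℤ)^(k-α)) a' := by
      apply IsCoprime.pow_left
      exact (Nat.prime_iff_prime_int.mp hp).coprime_iff_not_dvd.mpr hpa'
    exact hcop.dvd_of_dvd_mul_left h2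

/-- `2ω ≤ 2α + β` at each prime. -/
lemma local_two_omega (p : ℕ) (hp : p.Prime) (a b c d : ℤ) (α β ω : ℕ)
    (hαd : (p:ℤ)^α ∣ a) (hαn : ¬ (p:ℤ)^(α+1) ∣ a)
    (hβd : (p:ℤ)^β ∣ b) (hβn : ¬ (p:ℤ)^(β+1) ∣ b)
    (hω1 : (p:ℤ)^ω ∣ a^2) (hω2 : (p:ℤ)^ω ∣ a*b) (hω3 : (p:ℤ)^ω ∣ a*c)
    (hω4 : (p:ℤ)^ω ∣ b*d+c^2)
    (hprim : ¬((p:ℤ) ∣ a ∧ (p:ℤ) ∣ b ∧ (p:ℤ) ∣ c ∧ (p:ℤ) ∣ d)) :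
    2*ω ≤ 2*α + β := by
  have hp0 : (p:ℤ) ≠ 0 := by exact_mod_cast hp.ne_zero
  have hw2a : ω ≤ 2*α := by
    by_contra hcon
    have h1 : (p:ℤ)^(2*α+1) ∣ a * a := by
      have h2 : (p:ℤ)^(2*α+1) ∣ (p:ℤ)^ω := pow_dvd_pow _ (by omega)
      rw [← sq]; exact h2.trans hω1
    exact hαn ((pow_dvd_pow _ (by omega)).trans (dvd_cancel_pow' p hp hαd hαn h1))
  have hwab : ω ≤ α + β := by
    by_contra hcon
    exact hβn ((pow_dvd_pow _ (by omega)).trans (dvd_cancel_pow' p hp hαd hαn hω2))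
  by_contra hcon
  have hωα : α + 1 ≤ ω := by omega
  have hc : (p:ℤ)^(ω - α) ∣ c := dvd_cancel_pow' p hp hαd hαn hω3
  have hpc : (p:ℤ) ∣ c := (pow_one (p:ℤ)) ▸ (pow_dvd_pow _ (by omega : 1 ≤ ω - α)).trans hc
  have hpa : (p:ℤ) ∣ a := (pow_one (p:ℤ)) ▸ (pow_dvd_pow _ (by omega : 1 ≤ α)).trans hαd
  have hpb : (p:ℤ) ∣ b := (pow_one (p:ℤ)) ▸ (pow_dvd_pow _ (by omega : 1 ≤ β)).trans hβd
  have hpd : ¬ (p:ℤ) ∣ d := fun hd => hprim ⟨hpa, hpb, hpc, hd⟩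
  have hβω : β + 1 ≤ ω := by omega
  have hE : (p:ℤ)^(β+1) ∣ b*d + c^2 := (pow_dvd_pow _ hβω).trans hω4
  have hc2 : (p:ℤ)^(β+1) ∣ c^2 := by
    have h3 : (p:ℤ)^((ω-α)+(ω-α)) ∣ c^2 := by rw [pow_add, sq]; exact mul_dvd_mul hc hc
    exact (pow_dvd_pow _ (by omega)).trans h3
  have hbd : (p:ℤ)^(β+1) ∣ b*d := by
    have := dvd_sub hE hc2
    simpa using this
  have hb' : (p:ℤ)^(β+1) ∣ b := by
    have h0 : (p:ℤ)^(0:ℕ) ∣ d := by simp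
    have h0n : ¬ (p:ℤ)^(0+1) ∣ d := by simpa using hpd
    have := dvd_cancel_pow' p hp h0 h0n (by rwa [mul_comm] at hbd : (p:ℤ)^(β+1) ∣ d * b)
    simpa using this
  exact hβn hb'

def nNf (ω δ' : ℕ) : ℕ := min ω δ'
def n5f (ω δ' : ℕ) : ℕ := min (nNf ω δ') (ω - nNf ω δ')
def n4f (ω δ' : ℕ) : ℕ := min (nNf ω δ') (δ' - nNf ω δ')
def n3f (ω δ' : ℕ) : ℕ := nNf ω δ' - n4f ω δ' - n5f ω δ'
def n2f (ω δ' : ℕ) : ℕ := ω - nNf ω δ' - n5f ω δ'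
def n1f (ω δ' : ℕ) : ℕ := δ' - nNf ω δ' - n4f ω δ'

lemma local_main (p : ℕ) (hp : p.Prime) (a b c d : ℤ) (α β ω δ' : ℕ)
    (hαd : (p:ℤ)^α ∣ a) (hαn : ¬ (p:ℤ)^(α+1) ∣ a)
    (hβd : (p:ℤ)^β ∣ b) (hβn : ¬ (p:ℤ)^(β+1) ∣ b)
    (hω1 : (p:ℤ)^ω ∣ a^2) (hω2 : (p:ℤ)^ω ∣ a*b) (hω3 : (p:ℤ)^ω ∣ a*c)
    (hω4 : (p:ℤ)^ω ∣ b*d+c^2)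
    (hωmax : ¬((p:ℤ)^(ω+1) ∣ a^2 ∧ (p:ℤ)^(ω+1) ∣ a*b ∧ (p:ℤ)^(ω+1) ∣ a*c ∧
        (p:ℤ)^(ω+1) ∣ (b*d+c^2)))
    (hprim : ¬((p:ℤ) ∣ a ∧ (p:ℤ) ∣ b ∧ (p:ℤ) ∣ c ∧ (p:ℤ) ∣ d))
    (hδ : 2*ω + δ' = 2*α + β)
    (hn : min ω δ' ≤ 1) (hω' : ω ≤ min ω δ' + 1) (hδ'' : δ' ≤ min ω δ' + 1) :
    α = n3f ω δ' + n5f ω δ' + 2 * n4f ω δ' + n2f ω δ' ∧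
    β = n3f ω δ' + 3 * n5f ω δ' + n1f ω δ' ∧
    (p:ℤ)^(n3f ω δ' + n5f ω δ') ∣ c := by
  have hp0 : (p:ℤ) ≠ 0 := by exact_mod_cast hp.ne_zero
  have hpp : Prime (p:ℤ) := Nat.prime_iff_prime_int.mp hp
  have hw2a : ω ≤ 2*α := by
    by_contra hcon
    have h1 : (p:ℤ)^(2*α+1) ∣ a * a := by
      have h2 : (p:ℤ)^(2*α+1) ∣ (p:ℤ)^ω := pow_dvd_pow _ (by omega)
      rw [← sq]; exact h2.trans hω1
    exact hαn ((pow_dvd_pow _ (by omega)).trans (dvd_cancel_pow' p hp hαd hαn h1))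
  have hwab : ω ≤ α + β := by
    by_contra hcon
    exact hβn ((pow_dvd_pow _ (by omega)).trans (dvd_cancel_pow' p hp hαd hαn hω2))
  have hc : (p:ℤ)^(ω - α) ∣ c := dvd_cancel_pow' p hp hαd hαn hω3
  have hωle : ω ≤ 2 := by omega
  have hδle : δ' ≤ 2 := by omega
  have keyc : 1 ≤ β → 1 ≤ ω → (p:ℤ) ∣ c := by
    intro hβ1 hω1'
    by_contra hpc
    have hpbd : (p:ℤ) ∣ b*d :=
      Dvd.dvd.mul_right ((pow_one (p:ℤ)) ▸ (pow_dvd_pow (p:ℤ) hβ1).trans hβd) d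
    have hpE : (p:ℤ) ∣ b*d + c^2 := (pow_one (p:ℤ)) ▸ (pow_dvd_pow (p:ℤ) hω1').trans hω4
    have hcc : (p:ℤ) ∣ c^2 := by
      have := dvd_sub hpE hpbd; simpa using this
    exact hpc (hpp.dvd_of_dvd_pow hcc)
  have hd0 : (p:ℤ)^(0:ℕ) ∣ d := by simp
  interval_cases ω <;> interval_cases δ' <;>
      simp only [nNf, n5f, n4f, n3f, n2f, n1f] <;> norm_num <;> try omega
  · -- ω = 1, δ' = 2 : goal α = 2 ∧ β = 0
    have hα2 : α = 2 := by
      by_contra hne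
      obtain ⟨hα1, hβ2⟩ : α = 1 ∧ β = 2 := by omega
      subst hα1; subst hβ2
      have hpa : (p:ℤ) ∣ a := by simpa using hαd
      have hpb : (p:ℤ) ∣ b := by
        have := (pow_dvd_pow (p:ℤ) (one_le_two)).trans hβd
        simpa using this
      have hpc : (p:ℤ) ∣ c := keyc (by omega) (by omega)
      refine hωmax ⟨?_, ?_, ?_, ?_⟩
      · have := mul_dvd_mul hpa hpa; rw [← sq, ← sq] at this; simpa using this
      · have := mul_dvd_mul hpa hpb; rw [← sq] at this; simpa using this
      · have := mul_dvd_mul hpa hpc; rw [← sq] at this; simpa using this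
      · refine dvd_add (hβd.mul_right d) ?_
        have := mul_dvd_mul hpc hpc; rw [← sq, ← sq] at this; simpa using this
    exact ⟨hα2, by omega⟩
  · -- ω = 2, δ' = 1 : goal α = 1 ∧ β = 3 ∧ p ∣ c
    have hpc : (p:ℤ) ∣ c := keyc (by omega) (by omega)
    have hα1 : α = 1 := by
      by_contra hne
      obtain ⟨hα2, hβ1⟩ : α = 2 ∧ β = 1 := by omega
      subst hα2; subst hβ1
      have hpa : (p:ℤ) ∣ a := by
        have := (pow_dvd_pow (p:ℤ) (one_le_two)).trans hαd
        simpa using this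
      have hpd : ¬ (p:ℤ) ∣ d := fun h => hprim ⟨hpa, by simpa using hβd, hpc, h⟩
      have hc2 : (p:ℤ)^2 ∣ c^2 := by
        have := mul_dvd_mul hpc hpc; rw [← sq, ← sq] at this; simpa using this
      have hbd : (p:ℤ)^2 ∣ b*d := by
        have := dvd_sub hω4 hc2; simpa using this
      have hb2 : (p:ℤ)^2 ∣ b := by
        have h0n : ¬(p:ℤ)^(0+1) ∣ d := by simpa using hpd
        have := dvd_cancel_pow' p hp hd0 h0n (by rwa [mul_comm] at hbd)
        simpa using this
      exact hβn (by simpa using hb2)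
    refine ⟨hα1, by omega, by simpa using hpc⟩

/-- gcd of all nine entries of an integer matrix -/
def egcd (A : M3) : ℤ := Finset.univ.gcd fun ij : Fin 3 × Fin 3 => A ij.1 ij.2

lemma egcd_dvd (A : M3) (i j : Fin 3) : egcd A ∣ A i j :=
  Finset.gcd_dvd (Finset.mem_univ (i, j))

lemma dvd_egcd (A : M3) (x : ℤ) (h : ∀ i j, x ∣ A i j) : x ∣ egcd A :=
  Finset.dvd_gcd fun ij _ => h ij.1 ij.2

lemma egcd_nonneg (A : M3) : 0 ≤ egcd A := by
  have h := Finset.normalize_gcd (s := (Finset.univ : Finset (Fin 3 × Fin 3)))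
    (f := fun ij => A ij.1 ij.2)
  rw [← Int.abs_eq_normalize] at h
  rw [show egcd A = |egcd A| from h.symm]
  exact abs_nonneg _

lemma egcd_dvd_conj (P A Q : M3) : egcd A ∣ egcd (P * A * Q) := by
  refine dvd_egcd _ _ fun i j => ?_
  rw [Matrix.mul_apply]
  refine Finset.dvd_sum fun k _ => ?_
  rw [Matrix.mul_apply, Finset.sum_mul]
  refine Finset.dvd_sum fun l _ => ?_
  exact ((egcd_dvd A l k).mul_left _).mul_right _

lemma egcd_conj_eq (A P Q P' Q' : M3) (hP : P' * P = 1) (hQ : Q * Q' = 1) :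
    egcd (P * A * Q) = egcd A := by
  refine Int.dvd_antisymm (egcd_nonneg _) (egcd_nonneg _) ?_ ?_
  · have h := egcd_dvd_conj P' (P * A * Q) Q'
    have he : P' * (P * A * Q) * Q' = A := by
      rw [← Matrix.mul_assoc, ← Matrix.mul_assoc, hP, Matrix.one_mul, Matrix.mul_assoc, hQ,
        Matrix.mul_one]
    rwa [he] at h
  · exact egcd_dvd_conj P A Q

lemma natCast_div_exact {m n : ℕ} (h : n ∣ m) (hn : n ≠ 0) :
    ((m / n : ℕ) : ℤ) = (m : ℤ) / (n : ℤ) := by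
  obtain ⟨k, rfl⟩ := h
  rw [Nat.mul_div_cancel_left k (Nat.pos_of_ne_zero hn)]
  push_cast
  rw [Int.mul_ediv_cancel_left _ (by exact_mod_cast hn)]

lemma egcd_explicit (a b c d : ℤ) :
    egcd (!![-(b*d) - c*c, a*c, a*b; a*c, -(a*a), 0; a*b, 0, 0] : M3)
      = (Int.gcd (a^2) (Int.gcd (a*b) (Int.gcd (a*c) (b*d+c^2)) : ℤ) : ℤ) := by
  set g : ℕ := Int.gcd (a^2) (Int.gcd (a*b) (Int.gcd (a*c) (b*d+c^2)) : ℤ) with hgdef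
  have hgd1 : (g:ℤ) ∣ a^2 := Int.gcd_dvd_left _ _
  have hgdm : (g:ℤ) ∣ (Int.gcd (a*b) (Int.gcd (a*c) (b*d+c^2)) : ℤ) := Int.gcd_dvd_right _ _
  have hgd2 : (g:ℤ) ∣ a*b := hgdm.trans (Int.gcd_dvd_left _ _)
  have hgdi : (g:ℤ) ∣ (Int.gcd (a*c) (b*d+c^2) : ℤ) := hgdm.trans (Int.gcd_dvd_right _ _)
  have hgd3 : (g:ℤ) ∣ a*c := hgdi.trans (Int.gcd_dvd_left _ _)
  have hgd4 : (g:ℤ) ∣ b*d+c^2 := hgdi.trans (Int.gcd_dvd_right _ _)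
  refine Int.dvd_antisymm (egcd_nonneg _) (by positivity) ?_ ?_
  · have e00 := egcd_dvd (!![-(b*d) - c*c, a*c, a*b; a*c, -(a*a), 0; a*b, 0, 0] : M3) 0 0
    have e01 := egcd_dvd (!![-(b*d) - c*c, a*c, a*b; a*c, -(a*a), 0; a*b, 0, 0] : M3) 0 1
    have e02 := egcd_dvd (!![-(b*d) - c*c, a*c, a*b; a*c, -(a*a), 0; a*b, 0, 0] : M3) 0 2
    have e11 := egcd_dvd (!![-(b*d) - c*c, a*c, a*b; a*c, -(a*a), 0; a*b, 0, 0] : M3) 1 1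
    rw [show (!![-(b*d) - c*c, a*c, a*b; a*c, -(a*a), 0; a*b, 0, 0] : M3) 0 0 = -(b*d) - c*c from by simp] at e00
    rw [show (!![-(b*d) - c*c, a*c, a*b; a*c, -(a*a), 0; a*b, 0, 0] : M3) 0 1 = a*c from by simp] at e01
    rw [show (!![-(b*d) - c*c, a*c, a*b; a*c, -(a*a), 0; a*b, 0, 0] : M3) 0 2 = a*b from by simp] at e02
    rw [show (!![-(b*d) - c*c, a*c, a*b; a*c, -(a*a), 0; a*b, 0, 0] : M3) 1 1 = -(a*a) from by simp] at e11
    refine Int.dvd_coe_gcd ?_ (Int.dvd_coe_gcd e02 (Int.dvd_coe_gcd e01 ?_))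
    · rw [pow_two]
      exact dvd_neg.mp e11
    · rw [show b*d + c^2 = -(-(b*d) - c*c) from by ring]
      exact dvd_neg.mpr e00
  · refine dvd_egcd _ _ fun i j => ?_
    have k00 : (g:ℤ) ∣ -(b*d) - c*c := by
      have h := dvd_neg.mpr hgd4
      have he : -(b*d+c^2) = -(b*d) - c*c := by ring
      rwa [he] at h
    have k11 : (g:ℤ) ∣ -(a*a) := by
      refine dvd_neg.mpr ?_
      rw [← pow_two]
      exact hgd1
    fin_cases i <;> fin_cases j <;>
      simp only [Fin.zero_eta, Fin.mk_one, Matrix.cons_val', Matrix.cons_val_zero,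
        Matrix.cons_val_one, Matrix.head_cons, Matrix.empty_val', Matrix.cons_val_fin_one,
        Matrix.head_fin_const, Matrix.cons_val_two, Matrix.tail_cons, Matrix.of_apply] <;>
      first
        | exact k00
        | exact k11
        | exact hgd2
        | exact hgd3
        | exact dvd_zero _
        | skip

end StatementFifteenAux

/-- equation (3.6) and (3.10). If special `S` is properly equivalent to
`S₁ = [[0,0,a],[0,−b,c],[a,c,d]]` with `a, b > 0`, then necessarily
`a = N₃N₅N₄²N₂`, `b = N₃N₅³N₁` and `N₃N₅ ∣ c`. -/
theorem reduced_entries_determined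
    (S : M3) (hsymm : S.IsSymm) (hspec : IsSpecial S)
    (M : M3) (a b c d : ℤ) (hM : M.det = 1) (ha : 0 < a) (hb : 0 < b)
    (hred : Mᵀ * S * M = !![0, 0, a; 0, -b, c; a, c, d]) :
    a = N3v S * N5v S * N4v S ^ 2 * N2v S ∧
    b = N3v S * N5v S ^ 3 * N1v S ∧
    (N3v S * N5v S) ∣ c := by
  classical
  obtain ⟨hprimS, -, hdetpos, hsqN, hsqO, hsqD⟩ := hspec
  set S₁ : M3 := !![0, 0, a; 0, -b, c; a, c, d] with hS₁def
  -- unimodularity facts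
  have hM' : Mᵀ.det = 1 := by rw [Matrix.det_transpose]; exact hM
  have h1 : M * M.adjugate = 1 := by rw [Matrix.mul_adjugate, hM, one_smul]
  have h2 : M.adjugate * M = 1 := by rw [Matrix.adjugate_mul, hM, one_smul]
  have h1' : Mᵀ * Mᵀ.adjugate = 1 := by rw [Matrix.mul_adjugate, hM', one_smul]
  have h2' : Mᵀ.adjugate * Mᵀ = 1 := by rw [Matrix.adjugate_mul, hM', one_smul]
  -- determinant
  have hdetS : S.det = a^2*b := by
    have hd1 : (Mᵀ * S * M).det = S.det := by
      rw [Matrix.det_mul, Matrix.det_mul, hM, hM', one_mul, mul_one]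
    rw [hred] at hd1
    rw [← hd1, Matrix.det_fin_three]
    simp [hS₁def]
    ring
  -- egcd invariance
  have hegcd_adj : egcd S₁.adjugate = egcd S.adjugate := by
    have hadj : (Mᵀ * S * M).adjugate = M.adjugate * S.adjugate * Mᵀ.adjugate := by
      rw [Matrix.adjugate_mul_distrib, Matrix.adjugate_mul_distrib, Matrix.mul_assoc]
    rw [← hred, hadj]
    exact egcd_conj_eq S.adjugate M.adjugate Mᵀ.adjugate M Mᵀ h1 h2'
  have hegcd_S : egcd S₁ = egcd S := by
    rw [← hred]
    exact egcd_conj_eq S Mᵀ M Mᵀ.adjugate M.adjugate h2' h1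
  -- primitivity of S gives egcd S = 1
  have hegcdS_one : egcd S = 1 := by
    refine Int.eq_one_of_dvd_one (egcd_nonneg S) ?_
    have h00 := egcd_dvd S 0 0
    have h11 := egcd_dvd S 1 1
    have h22 := egcd_dvd S 2 2
    have h01 := egcd_dvd S 0 1
    have h12 := egcd_dvd S 1 2
    have h02 := egcd_dvd S 0 2
    have := Int.dvd_coe_gcd h00 (Int.dvd_coe_gcd h11 (Int.dvd_coe_gcd h22
      (Int.dvd_coe_gcd h01 (Int.dvd_coe_gcd h12 h02))))
    rw [PrimForm] at hprimS
    rw [hprimS] at this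
    exact_mod_cast this
  -- per-prime primitivity of (a,b,c,d)
  have hprim : ∀ p : ℕ, p.Prime →
      ¬((p:ℤ) ∣ a ∧ (p:ℤ) ∣ b ∧ (p:ℤ) ∣ c ∧ (p:ℤ) ∣ d) := by
    intro p hp ⟨hpa, hpb, hpc, hpd⟩
    have hdvd : (p:ℤ) ∣ egcd S₁ := by
      refine dvd_egcd _ _ fun i j => ?_
      fin_cases i <;> fin_cases j <;>
        simp [hS₁def, hpa, hpb, hpc, hpd, dvd_neg]
    rw [hegcd_S, hegcdS_one] at hdvd
    have : (p:ℕ) ∣ 1 := by exact_mod_cast hdvd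
    exact hp.one_lt.ne' (Nat.dvd_one.mp this)
  -- the adjugate of S₁
  have hadjS₁ : S₁.adjugate = !![-(b*d) - c*c, a*c, a*b; a*c, -(a*a), 0; a*b, 0, 0] := by
    rw [hS₁def, Matrix.adjugate_fin_three]
    congr 1 <;> simp <;> constructor <;> ring
  -- the gcd value
  set g : ℕ := Int.gcd (a^2) (Int.gcd (a*b) (Int.gcd (a*c) (b*d+c^2)) : ℤ) with hgdef
  have hgd1 : (g:ℤ) ∣ a^2 := Int.gcd_dvd_left _ _
  have hgdm : (g:ℤ) ∣ (Int.gcd (a*b) (Int.gcd (a*c) (b*d+c^2)) : ℤ) := Int.gcd_dvd_right _ _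
  have hgd2 : (g:ℤ) ∣ a*b := hgdm.trans (Int.gcd_dvd_left _ _)
  have hgdi : (g:ℤ) ∣ (Int.gcd (a*c) (b*d+c^2) : ℤ) := hgdm.trans (Int.gcd_dvd_right _ _)
  have hgd3 : (g:ℤ) ∣ a*c := hgdi.trans (Int.gcd_dvd_left _ _)
  have hgd4 : (g:ℤ) ∣ b*d+c^2 := hgdi.trans (Int.gcd_dvd_right _ _)
  have hegcd_val : egcd S₁.adjugate = (g:ℤ) := by
    rw [hadjS₁, hgdef]
    exact egcd_explicit a b c d
  -- Omega
  have hΩ : OmegaInv S = -(g:ℤ) := by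
    have : OmegaInv S = -(egcd S.adjugate) := rfl
    rw [this, ← hegcd_adj, hegcd_val]
  have hg0 : g ≠ 0 := by
    intro h
    rw [hgdef] at h
    have := (Int.gcd_eq_zero_iff.mp h).1
    exact (pow_ne_zero 2 ha.ne') this
  -- natural number versions
  set A := a.toNat with hAdef
  set B := b.toNat with hBdef
  have haA : (A:ℤ) = a := Int.toNat_of_nonneg ha.le
  have hbB : (B:ℤ) = b := Int.toNat_of_nonneg hb.le
  have hA0 : A ≠ 0 := by
    intro h; rw [h] at haA; simp at haA; omega
  have hB0 : B ≠ 0 := by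
    intro h; rw [h] at hbB; simp at hbB; omega
  have hAB0 : A^2*B ≠ 0 := by positivity
  -- per-prime basic facts
  have hαfact : ∀ p : ℕ, p.Prime →
      ((p:ℤ)^(A.factorization p) ∣ a ∧ ¬(p:ℤ)^(A.factorization p + 1) ∣ a) := by
    intro p hp
    constructor
    · have := Nat.ordProj_dvd A p
      rw [← haA]; exact_mod_cast this
    · intro hcon
      have : (p:ℕ)^(A.factorization p + 1) ∣ A := by
        rw [← haA] at hcon; exact_mod_cast hcon
      exact Nat.pow_succ_factorization_not_dvd hA0 hp this
  have hβfact : ∀ p : ℕ, p.Prime →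
      ((p:ℤ)^(B.factorization p) ∣ b ∧ ¬(p:ℤ)^(B.factorization p + 1) ∣ b) := by
    intro p hp
    constructor
    · have := Nat.ordProj_dvd B p
      rw [← hbB]; exact_mod_cast this
    · intro hcon
      have : (p:ℕ)^(B.factorization p + 1) ∣ B := by
        rw [← hbB] at hcon; exact_mod_cast hcon
      exact Nat.pow_succ_factorization_not_dvd hB0 hp this
  have hωfact : ∀ p : ℕ, p.Prime →
      ((p:ℤ)^(g.factorization p) ∣ a^2 ∧ (p:ℤ)^(g.factorization p) ∣ a*b ∧
       (p:ℤ)^(g.factorization p) ∣ a*c ∧ (p:ℤ)^(g.factorization p) ∣ b*d+c^2 ∧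
       ¬((p:ℤ)^(g.factorization p + 1) ∣ a^2 ∧ (p:ℤ)^(g.factorization p + 1) ∣ a*b ∧
         (p:ℤ)^(g.factorization p + 1) ∣ a*c ∧ (p:ℤ)^(g.factorization p + 1) ∣ b*d+c^2)) := by
    intro p hp
    have hpg : ((p:ℤ))^(g.factorization p) ∣ (g:ℤ) := by
      have := Nat.ordProj_dvd g p
      exact_mod_cast this
    refine ⟨hpg.trans hgd1, hpg.trans hgd2, hpg.trans hgd3, hpg.trans hgd4, ?_⟩
    rintro ⟨k1, k2, k3, k4⟩
    have hk : ((p:ℤ))^(g.factorization p + 1) ∣ (g:ℤ) := by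
      rw [hgdef]
      exact Int.dvd_coe_gcd k1 (Int.dvd_coe_gcd k2 (Int.dvd_coe_gcd k3 k4))
    have : (p:ℕ)^(g.factorization p + 1) ∣ g := by exact_mod_cast hk
    exact Nat.pow_succ_factorization_not_dvd hg0 hp this
  -- 2ω ≤ 2α+β pointwise, hence g² ∣ A²B
  have h2ω : ∀ p : ℕ, p.Prime →
      2 * g.factorization p ≤ 2 * A.factorization p + B.factorization p := by
    intro p hp
    obtain ⟨hαd, hαn⟩ := hαfact p hp
    obtain ⟨hβd, hβn⟩ := hβfact p hp
    obtain ⟨hω1, hω2, hω3, hω4, -⟩ := hωfact p hp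
    exact local_two_omega p hp a b c d _ _ _ hαd hαn hβd hβn hω1 hω2 hω3 hω4 (hprim p hp)
  have hgg : g^2 ∣ A^2*B := by
    rw [← Nat.factorization_le_iff_dvd (by positivity) hAB0]
    rw [Finsupp.le_def]
    intro p
    by_cases hp : p.Prime
    · rw [Nat.factorization_pow, Nat.factorization_mul (by positivity) hB0,
        Nat.factorization_pow]
      simp only [Finsupp.smul_apply, Finsupp.add_apply, smul_eq_mul]
      exact h2ω p hp
    · simp [Nat.factorization_eq_zero_of_not_prime _ hp]
  set Δn : ℕ := A^2*B/g^2 with hΔdef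
  have hΔ0 : Δn ≠ 0 := by
    have := Nat.div_pos (Nat.le_of_dvd (Nat.pos_of_ne_zero hAB0) hgg)
      (Nat.pos_of_ne_zero (by positivity))
    omega
  have habAB : a^2*b = ((A^2*B : ℕ) : ℤ) := by push_cast [haA, hbB]; ring
  have hΔ : DeltaInv S = (Δn:ℤ) := by
    rw [DeltaInv, hΩ, hdetS, habAB, hΔdef]
    rw [natCast_div_exact hgg (by positivity)]
    push_cast
    rw [neg_pow]
    norm_num
  -- the invariants as naturals
  set Nn : ℕ := Nat.gcd g Δn with hNndef
  have hNn0 : Nn ≠ 0 := Nat.gcd_ne_zero_left hg0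
  have hNval : Nval S = (Nn:ℤ) := by
    rw [Nval, hΩ, hΔ]
    rw [show Int.gcd (-(g:ℤ)) (Δn:ℤ) = Int.gcd (g:ℤ) (Δn:ℤ) from by rw [Int.gcd]; simp [Int.gcd]]
    rw [Int.gcd_natCast_natCast, hNndef]
  have hNg : Nn ∣ g := Nat.gcd_dvd_left g Δn
  have hNΔ : Nn ∣ Δn := Nat.gcd_dvd_right g Δn
  have hgN0 : g / Nn ≠ 0 := by
    have := Nat.div_pos (Nat.le_of_dvd (Nat.pos_of_ne_zero hg0) hNg) (Nat.pos_of_ne_zero hNn0)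
    omega
  have hΔN0 : Δn / Nn ≠ 0 := by
    have := Nat.div_pos (Nat.le_of_dvd (Nat.pos_of_ne_zero hΔ0) hNΔ) (Nat.pos_of_ne_zero hNn0)
    omega
  have hmO : -OmegaInv S / Nval S = ((g / Nn : ℕ) : ℤ) := by
    rw [hΩ, hNval, neg_neg, natCast_div_exact hNg hNn0]
  have hmΔ : DeltaInv S / Nval S = ((Δn / Nn : ℕ) : ℤ) := by
    rw [hΔ, hNval, natCast_div_exact hNΔ hNn0]
  set N5n : ℕ := Nat.gcd Nn (g / Nn) with hN5def
  set N4n : ℕ := Nat.gcd Nn (Δn / Nn) with hN4def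
  have hN50 : N5n ≠ 0 := Nat.gcd_ne_zero_left hNn0
  have hN40 : N4n ≠ 0 := Nat.gcd_ne_zero_left hNn0
  have hN5 : N5v S = (N5n:ℤ) := by
    rw [N5v, hmO, hNval, Int.gcd_natCast_natCast, hN5def]
  have hN4 : N4v S = (N4n:ℤ) := by
    rw [N4v, hmΔ, hNval, Int.gcd_natCast_natCast, hN4def]
  -- factorization formulas
  have hfΔ : ∀ p : ℕ, p.Prime → Δn.factorization p =
      2*(A.factorization p) + B.factorization p - 2*(g.factorization p) := by
    intro p hp
    rw [hΔdef, Nat.factorization_div hgg, Finsupp.tsub_apply,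
      Nat.factorization_mul (by positivity) hB0, Nat.factorization_pow, Nat.factorization_pow]
    simp only [Finsupp.add_apply, Finsupp.smul_apply, smul_eq_mul]
  have hfN : ∀ p : ℕ, Nn.factorization p = min (g.factorization p) (Δn.factorization p) := by
    intro p
    rw [hNndef, Nat.factorization_gcd hg0 hΔ0, Finsupp.inf_apply]
  have hfgN : ∀ p : ℕ, (g / Nn).factorization p = g.factorization p - Nn.factorization p := by
    intro p
    rw [Nat.factorization_div hNg, Finsupp.tsub_apply]
  have hfΔN : ∀ p : ℕ, (Δn / Nn).factorization p = Δn.factorization p - Nn.factorization p := by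
    intro p
    rw [Nat.factorization_div hNΔ, Finsupp.tsub_apply]
  have hfN5 : ∀ p : ℕ, N5n.factorization p
      = min (Nn.factorization p) ((g/Nn).factorization p) := by
    intro p
    rw [hN5def, Nat.factorization_gcd hNn0 hgN0, Finsupp.inf_apply]
  have hfN4 : ∀ p : ℕ, N4n.factorization p
      = min (Nn.factorization p) ((Δn/Nn).factorization p) := by
    intro p
    rw [hN4def, Nat.factorization_gcd hNn0 hΔN0, Finsupp.inf_apply]
  -- squarefreeness facts
  have hsfN : ∀ p : ℕ, Nn.factorization p ≤ 1 := by
    have h' : Squarefree (((Nn : ℤ)).natAbs) := Int.squarefree_natAbs.mpr (by rwa [hNval] at hsqN)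
    rw [Int.natAbs_natCast] at h'
    exact (Nat.squarefree_iff_factorization_le_one hNn0).mp h'
  have hsfO : ∀ p : ℕ, (g/Nn).factorization p ≤ 1 := by
    have h' : Squarefree ((((g/Nn : ℕ) : ℤ)).natAbs) :=
      Int.squarefree_natAbs.mpr (by rwa [hmO] at hsqO)
    rw [Int.natAbs_natCast] at h'
    exact (Nat.squarefree_iff_factorization_le_one hgN0).mp h'
  have hsfΔ : ∀ p : ℕ, (Δn/Nn).factorization p ≤ 1 := by
    have h' : Squarefree ((((Δn/Nn : ℕ) : ℤ)).natAbs) :=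
      Int.squarefree_natAbs.mpr (by rwa [hmΔ] at hsqD)
    rw [Int.natAbs_natCast] at h'
    exact (Nat.squarefree_iff_factorization_le_one hΔN0).mp h'
  -- divisibility relations among invariants, via factorizations
  have hfdvd : ∀ m n : ℕ, m ≠ 0 → n ≠ 0 →
      (∀ p : ℕ, p.Prime → m.factorization p ≤ n.factorization p) → m ∣ n := by
    intro m n hm hn h
    rw [← Nat.factorization_le_iff_dvd hm hn, Finsupp.le_def]
    intro p
    by_cases hp : p.Prime
    · exact h p hp
    · simp [Nat.factorization_eq_zero_of_not_prime _ hp]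
  have h45N : N4n * N5n ∣ Nn := by
    refine hfdvd _ _ (by positivity) hNn0 fun p hp => ?_
    rw [Nat.factorization_mul hN40 hN50, Finsupp.add_apply, hfN4 p, hfN5 p, hfgN p, hfΔN p,
      hfN p]
    omega
  have h450 : N4n * N5n ≠ 0 := by positivity
  have hN5g : Nn * N5n ∣ g := by
    refine hfdvd _ _ (by positivity) hg0 fun p hp => ?_
    rw [Nat.factorization_mul hNn0 hN50, Finsupp.add_apply, hfN5 p, hfgN p, hfN p]
    omega
  have hN4Δ : Nn * N4n ∣ Δn := by
    refine hfdvd _ _ (by positivity) hΔ0 fun p hp => ?_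
    rw [Nat.factorization_mul hNn0 hN40, Finsupp.add_apply, hfN4 p, hfΔN p, hfN p]
    omega
  set N3n : ℕ := Nn / (N4n * N5n) with hN3def
  set N2n : ℕ := g / (Nn * N5n) with hN2def
  set N1n : ℕ := Δn / (Nn * N4n) with hN1def
  have hN30 : N3n ≠ 0 := by
    have := Nat.div_pos (Nat.le_of_dvd (Nat.pos_of_ne_zero hNn0) h45N) (Nat.pos_of_ne_zero h450)
    omega
  have hN20 : N2n ≠ 0 := by
    have := Nat.div_pos (Nat.le_of_dvd (Nat.pos_of_ne_zero hg0) hN5g)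
      (Nat.pos_of_ne_zero (by positivity))
    omega
  have hN10 : N1n ≠ 0 := by
    have := Nat.div_pos (Nat.le_of_dvd (Nat.pos_of_ne_zero hΔ0) hN4Δ)
      (Nat.pos_of_ne_zero (by positivity))
    omega
  have hN3 : N3v S = (N3n:ℤ) := by
    rw [N3v, hNval, hN4, hN5, hN3def, natCast_div_exact h45N h450, Nat.cast_mul]
  have hN2 : N2v S = (N2n:ℤ) := by
    rw [N2v, hΩ, neg_neg, hNval, hN5, hN2def,
      natCast_div_exact hN5g (by positivity), Nat.cast_mul]
  have hN1 : N1v S = (N1n:ℤ) := by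
    rw [N1v, hΔ, hNval, hN4, hN1def,
      natCast_div_exact hN4Δ (by positivity), Nat.cast_mul]
  have hfN3 : ∀ p : ℕ, p.Prime → N3n.factorization p =
      Nn.factorization p - (N4n.factorization p + N5n.factorization p) := by
    intro p hp
    rw [hN3def, Nat.factorization_div h45N, Finsupp.tsub_apply,
      Nat.factorization_mul hN40 hN50, Finsupp.add_apply]
  have hfN2 : ∀ p : ℕ, p.Prime → N2n.factorization p =
      g.factorization p - (Nn.factorization p + N5n.factorization p) := by
    intro p hp
    rw [hN2def, Nat.factorization_div hN5g, Finsupp.tsub_apply,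
      Nat.factorization_mul hNn0 hN50, Finsupp.add_apply]
  have hfN1 : ∀ p : ℕ, p.Prime → N1n.factorization p =
      Δn.factorization p - (Nn.factorization p + N4n.factorization p) := by
    intro p hp
    rw [hN1def, Nat.factorization_div hN4Δ, Finsupp.tsub_apply,
      Nat.factorization_mul hNn0 hN40, Finsupp.add_apply]
  -- the main per-prime conclusion
  have main : ∀ p : ℕ, p.Prime →
      A.factorization p = N3n.factorization p + N5n.factorization p +
        2 * N4n.factorization p + N2n.factorization p ∧
      B.factorization p = N3n.factorization p + 3 * N5n.factorization p +
        N1n.factorization p ∧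
      (p:ℤ)^(N3n.factorization p + N5n.factorization p) ∣ c := by
    intro p hp
    obtain ⟨hαd, hαn⟩ := hαfact p hp
    obtain ⟨hβd, hβn⟩ := hβfact p hp
    obtain ⟨hω1, hω2, hω3, hω4, hωmax⟩ := hωfact p hp
    have hδeq : 2*(g.factorization p) + Δn.factorization p
        = 2*(A.factorization p) + B.factorization p := by
      have := h2ω p hp
      rw [hfΔ p hp]
      omega
    have hloc := local_main p hp a b c d _ _ _ _ hαd hαn hβd hβn hω1 hω2 hω3 hω4 hωmax
      (hprim p hp) hδeq
      (by rw [← hfN p]; exact hsfN p)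
      (by have h5 := hsfO p; rw [hfgN p, hfN p] at h5; rw [← hfN p] at h5 ⊢; omega)
      (by have h5 := hsfΔ p; rw [hfΔN p, hfN p] at h5; rw [← hfN p] at h5 ⊢; omega)
    -- identify the abstract n-values with the factorizations
    have e5 : N5n.factorization p = n5f (g.factorization p) (Δn.factorization p) := by
      rw [hfN5 p, hfgN p, hfN p, n5f, nNf]
    have e4 : N4n.factorization p = n4f (g.factorization p) (Δn.factorization p) := by
      rw [hfN4 p, hfΔN p, hfN p, n4f, nNf]
    have e3 : N3n.factorization p = n3f (g.factorization p) (Δn.factorization p) := by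
      rw [hfN3 p hp, e4, e5, hfN p, n3f, nNf]
      omega
    have e2 : N2n.factorization p = n2f (g.factorization p) (Δn.factorization p) := by
      rw [hfN2 p hp, e5, hfN p, n2f, nNf]
      omega
    have e1 : N1n.factorization p = n1f (g.factorization p) (Δn.factorization p) := by
      rw [hfN1 p hp, e4, hfN p, n1f, nNf]
      omega
    refine ⟨?_, ?_, ?_⟩
    · rw [e3, e5, e4, e2]; exact hloc.1
    · rw [e3, e5, e1]; exact hloc.2.1
    · rw [e3, e5]; exact hloc.2.2
  -- assemble: equality of naturals via factorizations
  have hnat_eq : ∀ m n : ℕ, m ≠ 0 → n ≠ 0 →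
      (∀ p : ℕ, p.Prime → m.factorization p = n.factorization p) → m = n := by
    intro m n hm hn h
    exact Nat.dvd_antisymm (hfdvd m n hm hn fun p hp => (h p hp).le)
      (hfdvd n m hn hm fun p hp => (h p hp).ge)
  have hTa : A = N3n * N5n * N4n^2 * N2n := by
    refine hnat_eq _ _ hA0 (by positivity) fun p hp => ?_
    rw [Nat.factorization_mul (by positivity) hN20, Nat.factorization_mul (by positivity)
      (by positivity : N4n^2 ≠ 0), Nat.factorization_mul hN30 hN50, Nat.factorization_pow]
    simp only [Finsupp.add_apply, Finsupp.smul_apply, smul_eq_mul]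
    have := (main p hp).1
    omega
  have hTb : B = N3n * N5n^3 * N1n := by
    refine hnat_eq _ _ hB0 (by positivity) fun p hp => ?_
    rw [Nat.factorization_mul (by positivity) hN10, Nat.factorization_mul hN30
      (by positivity : N5n^3 ≠ 0), Nat.factorization_pow]
    simp only [Finsupp.add_apply, Finsupp.smul_apply, smul_eq_mul]
    have := (main p hp).2.1
    omega
  refine ⟨?_, ?_, ?_⟩
  · rw [hN3, hN5, hN4, hN2, ← haA, hTa]
    push_cast
    ring
  · rw [hN3, hN5, hN1, ← hbB, hTb]
    push_cast
    ring
  · rw [hN3, hN5]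
    rcases eq_or_ne c 0 with rfl | hc0
    · exact dvd_zero _
    · have : ((N3n * N5n : ℕ) : ℤ) ∣ c := by
        rw [Int.natCast_dvd]
        refine hfdvd _ _ (by positivity) (Int.natAbs_ne_zero.mpr hc0) fun p hp => ?_
        have hdc := (main p hp).2.2
        have : (p:ℕ)^(N3n.factorization p + N5n.factorization p) ∣ c.natAbs := by
          have hh : ((p^(N3n.factorization p + N5n.factorization p) : ℕ) : ℤ) ∣ c := by
            exact_mod_cast hdc
          exact Int.natCast_dvd.mp hh
        rw [Nat.factorization_mul hN30 hN50, Finsupp.add_apply]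
        exact (Nat.Prime.pow_dvd_iff_le_factorization hp
          (Int.natAbs_ne_zero.mpr hc0)).mp this
      push_cast at this
      exact this
end
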